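/- For every preference profile P and every alternative w ∈ A: w ∈ RV^PUT(P) if and only if w ∈ RV(σ(E(M(P)), E(T^RSP(w, sRV(P)))), P). Consequently, RV^PUT(P) = { w ∈ A : w ∈ RV(σ(E(M(P)), E(T^RSP(w, sRV(P)))), P) }. -/

import Mathlib

attribute [local instance] Classical.propDecidable

/-- A preference profile: each of `m` voters has a strict linear (total) preference
relation over the alternatives `A`. -/
structure Profile (A : Type*) (m : ℕ) where
  pref : Fin m → A → A → Prop
  strict : ∀ i, IsStrictTotalOrder A (pref i)

/-- The majority margin of `x` over `y`: the number of voters preferring `x` to `y`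
minus the number of voters preferring `y` to `x`. -/
noncomputable def margin {A : Type*} [Fintype A] {m : ℕ} (P : Profile A m) (x y : A) : ℤ :=
  ((Finset.univ.filter fun i => P.pref i x y).card : ℤ) -
    ((Finset.univ.filter fun i => P.pref i y x).card : ℤ)

/-- The majority margin as a function on (potential) edges. -/
noncomputable def marginE {A : Type*} [Fintype A] {m : ℕ} (P : Profile A m) : A × A → ℤ :=
  fun e => margin P e.1 e.2

/-- The edge set of the margin graph: an edge `(x, y)` between distinct alternatives
whenever the majority margin of `x` over `y` is nonnegative. -/
noncomputable def marginEdges {A : Type*} [Fintype A] {m : ℕ} (P : Profile A m) :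
    Finset (A × A) :=
  Finset.univ.filter fun e => e.1 ≠ e.2 ∧ 0 ≤ margin P e.1 e.2

/-- `l` is a path from `x` to `y` in the digraph with edge set `E`:
a nonempty list of pairwise distinct vertices starting at `x`, ending at `y`,
whose consecutive vertices are joined by edges of `E`. -/
def IsPathFrom {V : Type*} (E : Finset (V × V)) (l : List V) (x y : V) : Prop :=
  l ≠ [] ∧ l.Nodup ∧ l.head? = some x ∧ l.getLast? = some y ∧
    l.Chain' fun a b => (a, b) ∈ E

/-- There is a path from `x` to `y` in the digraph with edge set `E`. -/
def Reach {V : Type*} (E : Finset (V × V)) (x y : V) : Prop :=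
  ∃ l, IsPathFrom E l x y

/-- The digraph with edge set `E` contains a directed cycle. -/
def HasCycle {V : Type*} (E : Finset (V × V)) : Prop :=
  ∃ f ∈ E, Reach E f.2 f.1

/-- `T` is a tree rooted at `r`: there is a unique path from `r` to every vertex,
no edge enters the root, and every vertex has at most one incoming edge. -/
def IsRootedTree {V : Type*} (T : Finset (V × V)) (r : V) : Prop :=
  (∀ v : V, ∃! l : List V, IsPathFrom T l r v) ∧ (∀ e ∈ T, e.2 ≠ r) ∧
    ∀ e f, e ∈ T → f ∈ T → e.2 = f.2 → e = f

/-- `a` has no incoming edge in `D`. -/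
def noIncoming {V : Type*} (D : Finset (V × V)) (a : V) : Prop :=
  ∀ e ∈ D, e.2 ≠ a

/-- `o` is a descending linear ordering of the edge set `E` with respect to the
margin function `marg`: an enumeration of `E` without repetition in which edges of
larger margin come before edges of smaller margin. -/
def IsDescOrdering {V : Type*} (marg : V × V → ℤ) (E : Finset (V × V))
    (o : List (V × V)) : Prop :=
  o.Nodup ∧ (∀ e, e ∈ o ↔ e ∈ E) ∧ o.Pairwise fun e f => marg f ≤ marg e

/-- One step of the River procedure: add `e = (x, y)` to the current diagram `D` unless
(R1) `y` already has an incoming edge in `D`, or (R2) there is a path from `y` to `x`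
in `D`. -/
noncomputable def riverStep {V : Type*} (D : Finset (V × V)) (e : V × V) :
    Finset (V × V) :=
  if (∃ f ∈ D, f.2 = e.2) ∨ Reach D e.2 e.1 then D else insert e D

/-- The River diagram obtained by processing the edges in the order `o`,
starting from the empty diagram. -/
noncomputable def riverFold {V : Type*} (o : List (V × V)) : Finset (V × V) :=
  o.foldl riverStep ∅

/-- One step of the semi-River process with margin function `marg`: add `e = (x, y)` to
the current diagram `D` unless
(sR1) there is another incoming edge `e' = (z, y)` of `y` among the included edges of
margin strictly greater than `marg e` such that there is no path from `y` to `z` among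
the included edges of margin at least `marg e'`, or
(sR2) within the included edges of strictly greater margin, the set of vertices having
a path to `x` avoiding all incoming edges of `y` induces an acyclic subgraph in which
`y` is the only vertex with no incoming edge. -/
noncomputable def semiRiverStep {V : Type*} (marg : V × V → ℤ) (D : Finset (V × V))
    (e : V × V) : Finset (V × V) :=
  let Sgt := D.filter fun f => marg e < marg f
  let sR1 : Prop := ∃ f ∈ Sgt, f.2 = e.2 ∧
      ¬ Reach (D.filter fun g => marg f ≤ marg g) e.2 f.1
  let Anc : Set V := {v | Reach (Sgt.filter fun g => g.2 ≠ e.2) v e.1}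
  let ind := Sgt.filter fun g => g.1 ∈ Anc ∧ g.2 ∈ Anc
  let sR2 : Prop := e.2 ∈ Anc ∧ ¬ HasCycle ind ∧
      ∀ v ∈ Anc, ((∀ g ∈ ind, g.2 ≠ v) ↔ v = e.2)
  if sR1 ∨ sR2 then D else insert e D

/-- The semi-River diagram obtained by processing the edges in the order `o`,
starting from the empty diagram. -/
noncomputable def semiRiverFold {V : Type*} (marg : V × V → ℤ) (o : List (V × V)) :
    Finset (V × V) :=
  o.foldl (semiRiverStep marg) ∅

/-- The runs of the directed Prim algorithm on the digraph with edge set `E`, weight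
function `w`, and start vertex `s`: `PrimRun E w s S T` holds if after some number of
steps the set of explored vertices is `S` and the collected tree edges are `T`; at each
step an arbitrary crossing edge of maximum weight is selected. -/
inductive PrimRun {V : Type*} {β : Type*} [LinearOrder β] (E : Finset (V × V))
    (w : V × V → β) (s : V) : Finset V → Finset (V × V) → Prop
  | init : PrimRun E w s {s} ∅
  | step {S : Finset V} {T : Finset (V × V)} (e : V × V) (he : e ∈ E)
      (h1 : e.1 ∈ S) (h2 : e.2 ∉ S)
      (hmax : ∀ f ∈ E, f.1 ∈ S → f.2 ∉ S → w f ≤ w e)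
      (hrun : PrimRun E w s S T) :
      PrimRun E w s (insert e.2 S) (insert e T)

/-- `T` is a possible output of the directed Prim algorithm on `(E, w)` started at `s`:
it is obtained by a run that has terminated, i.e. no crossing edge remains. -/
def IsPrimOutput {V : Type*} {β : Type*} [LinearOrder β] (E : Finset (V × V))
    (w : V × V → β) (s : V) (T : Finset (V × V)) : Prop :=
  ∃ S : Finset V, PrimRun E w s S T ∧ ∀ f ∈ E, f.1 ∈ S → f.2 ∈ S

/-- The strength of a path (as a list of vertices): the minimum weight of its edges,
`⊤` for a trivial path with no edges. -/
noncomputable def strength {V : Type*} (w : V × V → ℕ) (l : List V) : ℕ∞ :=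
  ((l.zip l.tail).map fun p => (w p : ℕ∞)).foldr min ⊤

/-- `l` is a strongest path from `x` to `y`: it is a path from `x` to `y` and no path
from `x` to `y` has (strictly) greater strength. -/
def IsStrongestPath {V : Type*} (E : Finset (V × V)) (w : V × V → ℕ) (l : List V)
    (x y : V) : Prop :=
  IsPathFrom E l x y ∧ ∀ l', IsPathFrom E l' x y → strength w l' ≤ strength w l

/-- `o` is a descending linear ordering of `E` in which, among edges of equal margin,
edges belonging to `E'` come before edges not belonging to `E'`. -/
def IsSetOrdering {V : Type*} (marg : V × V → ℤ) (E E' : Finset (V × V))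
    (o : List (V × V)) : Prop :=
  o.Nodup ∧ (∀ e, e ∈ o ↔ e ∈ E) ∧
    o.Pairwise fun e f => marg f ≤ marg e ∧ (marg e = marg f → f ∈ E' → e ∈ E')

/-!
Only the forward direction needs an argument. Let `N` be the semi-River diagram and `T` the Prim
tree grown from `w` in `N`. River admits an edge only when (sR1) and (sR2) fail for it, so every
River diagram lies inside `N`. If `w` wins River for some ordering, each edge `e` into `w` was
rejected there by (R2): a walk from `w` to the tail of `e` uses only edges of margin `≥ μ e`. It
lies in `N`, and since Prim builds widest paths, such a walk also exists in `T`. As (sR1) fails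
for the tree edges, every heavier rival `g` of a tree edge lies on a cycle of margin `≥ μ g` in
`N`, whose return walk again lies in `T`. Running River with the tree edges first among equal
margins, induction shows that each processed tree edge is realized (kept, or its head already
reaches its tail) and that no edge heavier than a tree edge enters its head; so the tree walks
out of `w` are rebuilt in time, and (R2) rejects every edge into `w`.
-/

open Relation

section Walks

variable {V : Type*} {E F : Finset (V × V)} {x y : V}

def HasWalk (E : Finset (V × V)) : V → V → Prop :=
  ReflTransGen fun a b => (a, b) ∈ E

theorem reach_iff_hasWalk : Reach E x y ↔ HasWalk E x y := by
  constructor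
  · rintro ⟨l, hne, -, hx, hy, hchain⟩
    obtain ⟨a, t, rfl⟩ := List.exists_cons_of_ne_nil hne
    obtain rfl : a = x := by simpa using hx
    exact List.relationReflTransGen_of_exists_isChain_cons t hchain
      (by simpa [List.getLast?_eq_some_getLast] using hy)
  · intro h
    induction h using ReflTransGen.head_induction_on with
    | refl => exact ⟨[y], by simp, by simp, rfl, rfl, List.isChain_singleton _⟩
    | @head a c hac _ ih =>
      obtain ⟨l, hne, hnd, hc, hy, hch⟩ := ih
      by_cases ha : a ∈ l
      · -- shortcut the walk at the earlier visit of `a`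
        obtain ⟨l₁, l₂, rfl⟩ := List.append_of_mem ha
        refine ⟨a :: l₂, by simp, hnd.sublist (List.sublist_append_right _ _), rfl, ?_,
          hch.suffix (List.suffix_append _ _)⟩
        rwa [List.getLast?_append_cons] at hy
      · obtain ⟨b, t, rfl⟩ := List.exists_cons_of_ne_nil hne
        obtain rfl : b = c := by simpa using hc
        refine ⟨a :: b :: t, by simp, List.nodup_cons.2 ⟨ha, hnd⟩, rfl, ?_, ?_⟩
        · simpa using hy
        · exact List.IsChain.cons_cons hac hch

theorem HasWalk.mono (hEF : E ⊆ F) (h : HasWalk E x y) : HasWalk F x y :=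
  ReflTransGen.mono (fun _ _ hab => hEF hab) _ _ h

theorem HasWalk.filter_insert {p : V × V → Prop} [DecidablePred p] (e : V × V)
    (h : HasWalk (E.filter p) x y) : HasWalk ((insert e E).filter p) x y :=
  h.mono (Finset.filter_subset_filter _ (Finset.subset_insert _ _))

theorem HasWalk.exists_mem_snd_eq (h : HasWalk E x y) (hxy : x ≠ y) : ∃ f ∈ E, f.2 = y := by
  rcases ReflTransGen.cases_tail h with rfl | ⟨c, -, hcy⟩
  · exact absurd rfl hxy
  · exact ⟨(c, y), hcy, rfl⟩

theorem HasWalk.exists_crossing {S : Finset V} (h : HasWalk E x y) (hx : x ∈ S) (hy : y ∉ S) :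
    ∃ f ∈ E, f.1 ∈ S ∧ f.2 ∉ S := by
  induction h using ReflTransGen.head_induction_on with
  | refl => exact absurd hx hy
  | @head a c hac _ ih =>
    by_cases hc : c ∈ S
    · exact ih hc
    · exact ⟨(a, c), hac, hx, hc⟩

theorem HasWalk.mem_of_closed {S : Finset V} (hS : ∀ f ∈ E, f.1 ∈ S → f.2 ∈ S)
    (h : HasWalk E x y) (hx : x ∈ S) : y ∈ S := by
  induction h with
  | refl => exact hx
  | tail _ hbc ih => exact hS _ hbc ih

theorem HasWalk.total_of_snd_injOn (hE : ∀ e ∈ E, ∀ f ∈ E, e.2 = f.2 → e = f)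
    (hx : HasWalk E x y) {z : V} (hz : HasWalk E z y) : HasWalk E x z ∨ HasWalk E z x := by
  induction hx generalizing z with
  | refl => exact Or.inr hz
  | @tail b c _ hbc ih =>
    rcases ReflTransGen.cases_tail hz with rfl | ⟨b', hzb', hb'c⟩
    · exact Or.inl (ReflTransGen.tail ‹_› hbc)
    · obtain rfl : b' = b := congrArg Prod.fst (hE _ hb'c _ hbc rfl)
      exact ih hzb'

theorem HasWalk.filter_hasWalk (h : HasWalk E x y) {z : V} (hyz : HasWalk E y z) :
    HasWalk (E.filter fun f => HasWalk E f.1 z ∧ HasWalk E f.2 z) x y := by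
  induction h using ReflTransGen.head_induction_on with
  | refl => exact ReflTransGen.refl
  | @head a c hac hcy ih =>
    have hcz : HasWalk E c z := ReflTransGen.trans hcy hyz
    exact ReflTransGen.head (Finset.mem_filter.2 ⟨hac, ReflTransGen.head hac hcz, hcz⟩) ih

theorem wellFounded_of_not_hasCycle [Finite V] (h : ¬ HasCycle E) :
    WellFounded fun a b => (a, b) ∈ E := by
  have : IsTrans V (TransGen fun a b => (a, b) ∈ E) := ⟨fun _ _ _ => TransGen.trans⟩
  have : Std.Irrefl (TransGen fun a b => (a, b) ∈ E) := by
    refine ⟨fun a ha => h ?_⟩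
    obtain ⟨b, hab, hba⟩ := TransGen.tail'_iff.1 ha
    exact ⟨(b, a), hba, reach_iff_hasWalk.2 hab⟩
  exact Subrelation.wf (r := TransGen fun a b => (a, b) ∈ E) (TransGen.single ·)
    (Finite.wellFounded_of_trans_of_irrefl _)

theorem hasWalk_of_forall_exists_edge {G D : Finset (V × V)} {A : Set V}
    (hG : WellFounded fun a b => (a, b) ∈ G)
    (h : ∀ v ∈ A, v ≠ x → ∃ u ∈ A, (u, v) ∈ G ∧ (u, v) ∈ D) :
    ∀ v ∈ A, HasWalk D x v := by
  intro v
  induction v using hG.induction with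
  | _ v ih =>
    intro hv
    by_cases hvx : v = x
    · exact hvx ▸ ReflTransGen.refl
    · obtain ⟨u, hu, huG, huD⟩ := h v hv hvx
      exact ReflTransGen.tail (ih u huG hu) huD

end Walks

section GuardedFold

variable {V : Type*}

/-- The common shape of `riverStep` and `semiRiverStep`. -/
noncomputable def guardStep (c : Finset (V × V) → V × V → Prop) (D : Finset (V × V))
    (e : V × V) : Finset (V × V) :=
  if c D e then D else insert e D

noncomputable def guardFold (c : Finset (V × V) → V × V → Prop) (l : List (V × V)) :
    Finset (V × V) :=
  l.foldl (guardStep c) ∅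

variable {c : Finset (V × V) → V × V → Prop} {l l₁ l₂ : List (V × V)} {e f : V × V}

theorem subset_foldl_guardStep (l : List (V × V)) (D : Finset (V × V)) :
    D ⊆ l.foldl (guardStep c) D := by
  induction l generalizing D with
  | nil => exact subset_rfl
  | cons e l ih =>
    refine subset_trans ?_ (ih _)
    unfold guardStep
    split_ifs
    exacts [subset_rfl, Finset.subset_insert _ _]

theorem mem_of_mem_foldl_guardStep {D : Finset (V × V)} (h : f ∈ l.foldl (guardStep c) D) :
    f ∈ D ∨ f ∈ l := by
  induction l generalizing D with
  | nil => exact Or.inl h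
  | cons e l ih =>
    rcases ih h with h | h
    · unfold guardStep at h
      split_ifs at h
      · exact Or.inl h
      · rcases Finset.mem_insert.1 h with rfl | h
        exacts [Or.inr List.mem_cons_self, Or.inl h]
    · exact Or.inr (List.mem_cons_of_mem _ h)

theorem guardFold_append (l₁ l₂ : List (V × V)) :
    guardFold c (l₁ ++ l₂) = l₂.foldl (guardStep c) (guardFold c l₁) :=
  List.foldl_append

theorem guardFold_append_singleton (l : List (V × V)) (e : V × V) :
    guardFold c (l ++ [e]) = guardStep c (guardFold c l) e :=
  List.foldl_append

theorem guardFold_subset_append : guardFold c l₁ ⊆ guardFold c (l₁ ++ l₂) := by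
  rw [guardFold_append]
  exact subset_foldl_guardStep _ _

theorem guardFold_mono (h : l₁ <+: l) : guardFold c l₁ ⊆ guardFold c l := by
  obtain ⟨l₂, rfl⟩ := h
  exact guardFold_subset_append

theorem mem_of_mem_guardFold (h : f ∈ guardFold c l) : f ∈ l :=
  (mem_of_mem_foldl_guardStep h).resolve_left (Finset.notMem_empty f)

theorem mem_of_mem_guardFold_append (h : f ∈ guardFold c (l₁ ++ l₂)) :
    f ∈ guardFold c l₁ ∨ f ∈ l₂ := by
  rw [guardFold_append] at h
  exact mem_of_mem_foldl_guardStep h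

theorem mem_guardFold_append_cons_iff (hl : (l₁ ++ e :: l₂).Nodup) :
    e ∈ guardFold c (l₁ ++ e :: l₂) ↔ ¬ c (guardFold c l₁) e := by
  obtain ⟨he₁, he₂⟩ : e ∉ l₁ ∧ e ∉ l₂ := by
    simp only [List.nodup_append, List.nodup_cons] at hl
    exact ⟨fun h => hl.2.2 e h e List.mem_cons_self rfl, hl.2.1.1⟩
  rw [← List.singleton_append, ← List.append_assoc, guardFold_append,
    guardFold_append_singleton]
  constructor
  · intro h hc
    rw [guardStep, if_pos hc] at h
    rcases mem_of_mem_foldl_guardStep h with h | h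
    exacts [he₁ (mem_of_mem_guardFold h), he₂ h]
  · intro hc
    rw [guardStep, if_neg hc]
    exact subset_foldl_guardStep _ _ (Finset.mem_insert_self _ _)

variable {μ : V × V → ℤ}

theorem filter_guardFold_subset (hl : (l₁ ++ e :: l₂).Pairwise fun a b => μ b ≤ μ a) :
    (guardFold c (l₁ ++ e :: l₂)).filter (fun f => μ e < μ f) ⊆ guardFold c l₁ := by
  intro f hf
  obtain ⟨hf, hlt⟩ := Finset.mem_filter.1 hf
  refine (mem_of_mem_guardFold_append hf).resolve_right fun hf₂ => hlt.not_ge ?_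
  rcases List.mem_cons.1 hf₂ with rfl | hf₂
  · exact le_rfl
  · exact (List.pairwise_cons.1 (List.pairwise_append.1 hl).2.1).1 f hf₂

theorem guardFold_subset_filter (hl : (l₁ ++ e :: l₂).Pairwise fun a b => μ b ≤ μ a) :
    guardFold c l₁ ⊆ (guardFold c (l₁ ++ e :: l₂)).filter (fun f => μ e ≤ μ f) :=
  fun f hf => Finset.mem_filter.2 ⟨guardFold_subset_append hf,
    (List.pairwise_append.1 hl).2.2 f (mem_of_mem_guardFold hf) e List.mem_cons_self⟩

/-- A guard that only looks at the strictly heavier edges of the diagram cannot tell the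
diagram at the time an edge is processed from the final one. -/
theorem mem_guardFold_iff (hc : ∀ D e, c (D.filter fun f => μ e < μ f) e ↔ c D e)
    (hnd : l.Nodup) (hl : l.Pairwise fun a b => μ b ≤ μ a) :
    e ∈ guardFold c l ↔ e ∈ l ∧ ¬ c (guardFold c l) e := by
  by_cases he : e ∈ l
  · obtain ⟨l₁, l₂, rfl⟩ := List.append_of_mem he
    have hfilter : (guardFold c l₁).filter (fun f => μ e < μ f) =
        (guardFold c (l₁ ++ e :: l₂)).filter (fun f => μ e < μ f) :=
      subset_antisymm (Finset.filter_subset_filter _ guardFold_subset_append)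
        fun f hf =>
          Finset.mem_filter.2 ⟨filter_guardFold_subset hl hf, (Finset.mem_filter.1 hf).2⟩
    rw [mem_guardFold_append_cons_iff hnd, ← hc, hfilter, hc]
    exact (and_iff_right he).symm
  · exact iff_of_false (fun h => he (mem_of_mem_guardFold h)) fun h => he h.1

end GuardedFold

section River

variable {V : Type*} {μ : V × V → ℤ} {E D D' : Finset (V × V)} {ov : List (V × V)}
  {e : V × V} {w : V}

def RiverGuard (D : Finset (V × V)) (e : V × V) : Prop :=
  (∃ f ∈ D, f.2 = e.2) ∨ HasWalk D e.2 e.1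

theorem RiverGuard.mono (hD : D ⊆ D') : RiverGuard D e → RiverGuard D' e :=
  Or.imp (fun ⟨f, hf, hfe⟩ => ⟨f, hD hf, hfe⟩) (HasWalk.mono hD)

theorem riverFold_eq_guardFold (l : List (V × V)) : riverFold l = guardFold RiverGuard l := by
  have : (riverStep : Finset (V × V) → V × V → Finset (V × V)) = guardStep RiverGuard := by
    funext D e
    simp only [riverStep, guardStep, RiverGuard, reach_iff_hasWalk]
    congr
  rw [riverFold, guardFold, this]

theorem riverFold_append_singleton (l : List (V × V)) (e : V × V) :
    riverFold (l ++ [e]) = guardStep RiverGuard (riverFold l) e := by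
  rw [riverFold_eq_guardFold, riverFold_eq_guardFold, guardFold_append_singleton]

theorem riverFold_snd_injOn (l : List (V × V)) :
    ∀ e ∈ riverFold l, ∀ f ∈ riverFold l, e.2 = f.2 → e = f := by
  induction l using List.reverseRecOn with
  | nil => simp [riverFold]
  | append_singleton l g ih =>
    rw [riverFold_append_singleton, guardStep]
    split_ifs with hg
    · exact ih
    · simp only [RiverGuard, not_or, not_exists, not_and] at hg
      simp only [Finset.mem_insert]
      rintro e (rfl | he) f (rfl | hf) hef
      exacts [rfl, absurd hef.symm (hg.1 f hf), absurd hef (hg.1 e he), ih e he f hf hef]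

theorem riverFold_subset (hov : IsDescOrdering μ E ov) : riverFold ov ⊆ E := fun f hf =>
  (hov.2.1 f).1 (mem_of_mem_guardFold (riverFold_eq_guardFold ov ▸ hf))

theorem not_riverGuard_of_mem_riverFold (hov : IsDescOrdering μ E ov)
    (he : e ∈ riverFold ov) : ¬ RiverGuard ((riverFold ov).filter fun f => μ e < μ f) e := by
  obtain ⟨l₁, l₂, rfl⟩ := List.append_of_mem (mem_of_mem_guardFold
    (riverFold_eq_guardFold ov ▸ he))
  rw [riverFold_eq_guardFold] at he ⊢
  exact fun hg => (mem_guardFold_append_cons_iff hov.1).1 he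
    (hg.mono (filter_guardFold_subset hov.2.2))

theorem riverGuard_of_notMem_riverFold (hov : IsDescOrdering μ E ov) (he : e ∈ E)
    (hne : e ∉ riverFold ov) : RiverGuard ((riverFold ov).filter fun f => μ e ≤ μ f) e := by
  obtain ⟨l₁, l₂, rfl⟩ := List.append_of_mem ((hov.2.1 e).2 he)
  rw [riverFold_eq_guardFold] at hne ⊢
  exact (not_not.1 (mt (mem_guardFold_append_cons_iff hov.1).2 hne)).mono
    (guardFold_subset_filter hov.2.2)

/-- An edge into a River winner cannot be rejected by (R1), only by (R2). -/
theorem hasWalk_of_noIncoming_riverFold (hov : IsDescOrdering μ E ov)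
    (hw : noIncoming (riverFold ov) w) (he : e ∈ E) (hew : e.2 = w) :
    HasWalk ((riverFold ov).filter fun f => μ e ≤ μ f) w e.1 := by
  have hne : e ∉ riverFold ov := fun h => hw e h hew
  rcases riverGuard_of_notMem_riverFold hov he hne with ⟨f, hf, hfe⟩ | h
  · exact absurd (hfe.trans hew) (hw f (Finset.mem_filter.1 hf).1)
  · rwa [← hew]

end River

section SemiRiver

variable {V : Type*} {μ : V × V → ℤ} {E D : Finset (V × V)} {o : List (V × V)}
  {e g t : V × V}

def SR1 (μ : V × V → ℤ) (D : Finset (V × V)) (e : V × V) : Prop :=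
  ∃ f ∈ D.filter fun f => μ e < μ f, f.2 = e.2 ∧
    ¬ HasWalk (D.filter fun g => μ f ≤ μ g) e.2 f.1

/-- The vertex set `Anc` of (sR2). -/
def ancestors (μ : V × V → ℤ) (D : Finset (V × V)) (e : V × V) : Set V :=
  {v | HasWalk ((D.filter fun f => μ e < μ f).filter fun g => g.2 ≠ e.2) v e.1}

noncomputable def ancestorGraph (μ : V × V → ℤ) (D : Finset (V × V)) (e : V × V) :
    Finset (V × V) :=
  (D.filter fun f => μ e < μ f).filter fun g =>
    g.1 ∈ ancestors μ D e ∧ g.2 ∈ ancestors μ D e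

def SR2 (μ : V × V → ℤ) (D : Finset (V × V)) (e : V × V) : Prop :=
  e.2 ∈ ancestors μ D e ∧ ¬ HasCycle (ancestorGraph μ D e) ∧
    ∀ v ∈ ancestors μ D e, ((∀ g ∈ ancestorGraph μ D e, g.2 ≠ v) ↔ v = e.2)

theorem semiRiverFold_eq_guardFold (l : List (V × V)) :
    semiRiverFold μ l = guardFold (fun D e => SR1 μ D e ∨ SR2 μ D e) l := by
  have : semiRiverStep μ = guardStep fun D e => SR1 μ D e ∨ SR2 μ D e := by
    funext D e
    simp only [semiRiverStep, guardStep, SR1, SR2, ancestorGraph, ancestors, reach_iff_hasWalk]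
    congr
  rw [semiRiverFold, guardFold, this]

theorem SR1_filter : SR1 μ (D.filter fun f => μ e < μ f) e ↔ SR1 μ D e := by
  simp only [SR1, Finset.filter_filter, and_self, Finset.mem_filter]
  refine exists_congr fun f => and_congr_right fun hf => ?_
  rw [Finset.filter_congr fun g _ => and_iff_right_of_imp hf.2.trans_le]

theorem SR2_filter : SR2 μ (D.filter fun f => μ e < μ f) e ↔ SR2 μ D e := by
  simp only [SR2, ancestorGraph, ancestors, Finset.filter_filter, and_self, and_self_left]

theorem mem_semiRiverFold_iff (ho : IsDescOrdering μ E o) :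
    e ∈ semiRiverFold μ o ↔ e ∈ E ∧ ¬ SR1 μ (semiRiverFold μ o) e ∧
      ¬ SR2 μ (semiRiverFold μ o) e := by
  rw [semiRiverFold_eq_guardFold, mem_guardFold_iff (fun D e => or_congr SR1_filter SR2_filter)
    ho.1 ho.2.2, ho.2.1, not_or]

theorem semiRiverFold_subset (ho : IsDescOrdering μ E o) : semiRiverFold μ o ⊆ E :=
  fun _ he => ((mem_semiRiverFold_iff ho).1 he).1

theorem hasWalk_of_mem_semiRiverFold (ho : IsDescOrdering μ E o) (ht : t ∈ semiRiverFold μ o)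
    (hg : g ∈ semiRiverFold μ o) (hgt : g.2 = t.2) (hlt : μ t < μ g) :
    HasWalk ((semiRiverFold μ o).filter fun f => μ g ≤ μ f) g.2 g.1 := by
  by_contra h
  exact ((mem_semiRiverFold_iff ho).1 ht).2.1
    ⟨g, Finset.mem_filter.2 ⟨hg, hlt⟩, hgt, hgt ▸ h⟩

end SemiRiver

section RiverInSemiRiver

variable {V : Type*} {μ : V × V → ℤ} {E N D : Finset (V × V)} {e : V × V}

theorem not_SR1_of_not_riverGuard (hD : D ⊆ N.filter fun f => μ e < μ f)
    (hacc : ¬ RiverGuard D e)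
    (hblock : ∀ g ∈ N, μ e < μ g → g ∉ D →
      RiverGuard (D.filter fun f => μ g ≤ μ f) g) :
    ¬ SR1 μ N e := by
  rintro ⟨f, hf, hfe, hnw⟩
  obtain ⟨hfN, hlt⟩ := Finset.mem_filter.1 hf
  rcases hblock f hfN hlt fun h => hacc (Or.inl ⟨f, h, hfe⟩) with ⟨h, hh, hhf⟩ | hw
  · exact hacc (Or.inl ⟨h, (Finset.mem_filter.1 hh).1, hhf.trans hfe⟩)
  · exact hnw (hfe ▸ hw.mono
      (Finset.filter_subset_filter _ (hD.trans (Finset.filter_subset _ _))))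

theorem not_SR2_of_not_riverGuard [Finite V] (hD : D ⊆ N.filter fun f => μ e < μ f)
    (hacc : ¬ RiverGuard D e)
    (hblock : ∀ g ∈ N, μ e < μ g → g ∉ D →
      RiverGuard (D.filter fun f => μ g ≤ μ f) g) :
    ¬ SR2 μ N e := by
  rintro ⟨-, hacyc, hroots⟩
  set F := (N.filter fun f => μ e < μ f).filter fun g => g.2 ≠ e.2
  set A := ancestors μ N e
  set G := ancestorGraph μ N e
  have hDF : D ⊆ F := fun f hf =>
    Finset.mem_filter.2 ⟨hD hf, fun hfe => hacc (Or.inl ⟨f, hf, hfe⟩)⟩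
  have hFG : F.filter (fun f => HasWalk F f.1 e.1 ∧ HasWalk F f.2 e.1) ⊆ G := fun f hf => by
    obtain ⟨hfF, hf₁, hf₂⟩ := Finset.mem_filter.1 hf
    exact Finset.mem_filter.2 ⟨(Finset.mem_filter.1 hfF).1, hf₁, hf₂⟩
  -- walking back from `e.1` along such edges must end at `e.2`, since `G` is acyclic
  have hstep : ∀ v ∈ A, v ≠ e.2 → ∃ u ∈ A, (u, v) ∈ G ∧ (u, v) ∈ D := by
    intro v hv hve
    obtain ⟨g, hgG, rfl⟩ : ∃ g ∈ G, g.2 = v := by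
      by_contra! h
      exact hve ((hroots v hv).1 h)
    obtain ⟨hgN, hlt⟩ := Finset.mem_filter.1 (Finset.mem_filter.1 hgG).1
    by_cases hgD : g ∈ D
    · exact ⟨g.1, (Finset.mem_filter.1 hgG).2.1, hgG, hgD⟩
    rcases hblock g hgN hlt hgD with ⟨h, hh, hhg⟩ | hw
    · obtain ⟨hhD, -⟩ := Finset.mem_filter.1 hh
      have hhF : (h.1, g.2) ∈ F := hhg ▸ hDF hhD
      have hh₁ : h.1 ∈ A := ReflTransGen.head hhF hv
      exact ⟨h.1, hh₁, hFG (Finset.mem_filter.2 ⟨hhF, hh₁, hv⟩), hhg ▸ hhD⟩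
    · have hwF : HasWalk F g.2 g.1 := hw.mono ((Finset.filter_subset _ _).trans hDF)
      exact absurd ⟨g, hgG, reach_iff_hasWalk.2
        ((hwF.filter_hasWalk (Finset.mem_filter.1 hgG).2.1).mono hFG)⟩ hacyc
  exact hacc (Or.inr (hasWalk_of_forall_exists_edge (wellFounded_of_not_hasCycle hacyc) hstep
    e.1 ReflTransGen.refl))

theorem riverFold_subset_semiRiverFold [Finite V] {o ov : List (V × V)}
    (ho : IsDescOrdering μ E o) (hov : IsDescOrdering μ E ov) :
    riverFold ov ⊆ semiRiverFold μ o := by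
  have : IsTrans (V × V) fun f e => μ e < μ f := ⟨fun _ _ _ h₁ h₂ => h₂.trans h₁⟩
  have : Std.Irrefl fun f e : V × V => μ e < μ f := ⟨fun _ => lt_irrefl _⟩
  intro e
  induction e using
    (Finite.wellFounded_of_trans_of_irrefl fun f e : V × V => μ e < μ f).induction with
  | _ e ih =>
    intro he
    set D := (riverFold ov).filter fun f => μ e < μ f
    have hD : D ⊆ (semiRiverFold μ o).filter fun f => μ e < μ f := fun f hf => by
      obtain ⟨hfR, hlt⟩ := Finset.mem_filter.1 hf
      exact Finset.mem_filter.2 ⟨ih f hlt hfR, hlt⟩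
    have hacc : ¬ RiverGuard D e := not_riverGuard_of_mem_riverFold hov he
    have hblock : ∀ g ∈ semiRiverFold μ o, μ e < μ g → g ∉ D →
        RiverGuard (D.filter fun f => μ g ≤ μ f) g := by
      intro g hg hlt hgD
      rw [Finset.filter_filter, Finset.filter_congr fun f _ => and_iff_right_of_imp hlt.trans_le]
      exact riverGuard_of_notMem_riverFold hov (semiRiverFold_subset ho hg)
        fun h => hgD (Finset.mem_filter.2 ⟨h, hlt⟩)
    exact (mem_semiRiverFold_iff ho).2 ⟨riverFold_subset hov he,
      not_SR1_of_not_riverGuard hD hacc hblock, not_SR2_of_not_riverGuard hD hacc hblock⟩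

end RiverInSemiRiver

section Prim

variable {V : Type*} {N T : Finset (V × V)} {μ : V × V → ℤ} {s : V}
  {S : Finset V}

theorem PrimRun.start_mem (h : PrimRun N μ s S T) : s ∈ S := by
  induction h with
  | init => exact Finset.mem_singleton_self s
  | step _ _ _ _ _ _ ih => exact Finset.mem_insert_of_mem ih

theorem PrimRun.mem_of_mem (h : PrimRun N μ s S T) {t : V × V} (ht : t ∈ T) :
    t ∈ N ∧ t.2 ∈ S ∧ t.2 ≠ s := by
  induction h with
  | init => exact absurd ht (Finset.notMem_empty t)
  | step e he _ h₂ _ hrun ih =>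
    rcases Finset.mem_insert.1 ht with rfl | ht
    · exact ⟨he, Finset.mem_insert_self _ _, fun hs => h₂ (hs ▸ hrun.start_mem)⟩
    · obtain ⟨htN, htS, hts⟩ := ih ht
      exact ⟨htN, Finset.mem_insert_of_mem htS, hts⟩

theorem PrimRun.snd_injOn (h : PrimRun N μ s S T) :
    ∀ t ∈ T, ∀ t' ∈ T, t.2 = t'.2 → t = t' := by
  induction h with
  | init => simp
  | step e _ _ h₂ _ hrun ih =>
    simp only [Finset.mem_insert]
    rintro t (rfl | ht) t' (rfl | ht') htt'
    exacts [rfl, absurd (htt' ▸ (hrun.mem_of_mem ht').2.1) h₂,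
      absurd (htt' ▸ (hrun.mem_of_mem ht).2.1) h₂, ih t ht t' ht' htt']

theorem le_of_hasWalk_of_mem_of_notMem {e : V × V} {c : ℤ}
    (hmax : ∀ f ∈ N, f.1 ∈ S → f.2 ∉ S → μ f ≤ μ e) {x y : V}
    (h : HasWalk (N.filter fun f => c ≤ μ f) x y) (hx : x ∈ S) (hy : y ∉ S) :
    c ≤ μ e := by
  obtain ⟨f, hf, hf₁, hf₂⟩ := h.exists_crossing hx hy
  obtain ⟨hfN, hcf⟩ := Finset.mem_filter.1 hf
  exact hcf.trans (hmax f hfN hf₁ hf₂)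

theorem PrimRun.hasWalk_filter (h : PrimRun N μ s S T) (hS : ∀ f ∈ N, f.1 ∈ S → f.2 ∈ S)
    (c : ℤ) {u : V} (hu : HasWalk (N.filter fun f => c ≤ μ f) s u) :
    HasWalk (T.filter fun f => c ≤ μ f) s u := by
  -- until every vertex `c`-reachable from `s` is explored, Prim only picks edges of weight `≥ c`
  set Nc := N.filter fun f => c ≤ μ f
  have key : ∀ {S T}, PrimRun N μ s S T →
      (∀ v, HasWalk Nc s v →
        v ∈ S ∧ HasWalk (T.filter fun f => c ≤ μ f) s v) ∨
      ∀ v ∈ S, HasWalk (T.filter fun f => c ≤ μ f) s v := by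
    intro S T h
    induction h with
    | init => exact Or.inr fun v hv => Finset.mem_singleton.1 hv ▸ ReflTransGen.refl
    | @step S₀ T₀ e _ h₁ _ hmax hrun ih =>
      rcases ih with hdone | hall
      · exact Or.inl fun v hv =>
          ⟨Finset.mem_insert_of_mem (hdone v hv).1, (hdone v hv).2.filter_insert e⟩
      by_cases hreach : ∀ v, HasWalk Nc s v → v ∈ S₀
      · exact Or.inl fun v hv =>
          ⟨Finset.mem_insert_of_mem (hreach v hv), (hall v (hreach v hv)).filter_insert e⟩
      push Not at hreach
      obtain ⟨v, hv, hvS⟩ := hreach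
      have hce : c ≤ μ e := le_of_hasWalk_of_mem_of_notMem hmax hv hrun.start_mem hvS
      refine Or.inr fun v hv => ?_
      rcases Finset.mem_insert.1 hv with rfl | hv
      · exact ReflTransGen.tail ((hall _ h₁).filter_insert e)
          (Finset.mem_filter.2 ⟨Finset.mem_insert_self _ _, hce⟩)
      · exact (hall v hv).filter_insert e
  rcases key h with hdone | hall
  · exact (hdone u hu).2
  · exact hall u (hu.mem_of_closed (fun f hf => hS f (Finset.mem_filter.1 hf).1) h.start_mem)

/-- Once `g.2` is explored through an edge lighter than `g`, `g.1` is not yet explored, and from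
then on Prim only chooses edges of weight `≥ μ g` until it is. -/
theorem PrimRun.rival_invariant (h : PrimRun N μ s S T) {g : V × V} (hg : g ∈ N)
    (hcyc : HasWalk (N.filter fun t => μ g ≤ μ t) g.2 g.1) :
    g.2 ∉ S ∨ (∃ t ∈ T, t.2 = g.2 ∧ μ g ≤ μ t) ∨
      HasWalk (T.filter fun t => μ g ≤ μ t) g.2 g.1 ∨
      g.2 ∈ S ∧ ∀ v ∈ S, HasWalk (N.filter fun t => μ g ≤ μ t) v g.1 →
        HasWalk (T.filter fun t => μ g ≤ μ t) g.2 v := by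
  induction h with
  | init =>
    by_cases hgs : g.2 = s
    · refine Or.inr (Or.inr (Or.inr ⟨hgs ▸ Finset.mem_singleton_self _, fun v hv _ => ?_⟩))
      rw [Finset.mem_singleton.1 hv, ← hgs]
      exact ReflTransGen.refl
    · exact Or.inl fun hg => hgs (Finset.mem_singleton.1 hg)
  | @step S₀ T₀ e he h₁ h₂ hmax hrun ih =>
    rcases ih with hgS | ⟨t, ht, htg, hle⟩ | hw | ⟨hgS, hall⟩
    · by_cases heg : e.2 = g.2
      · by_cases hle : μ g ≤ μ e
        · exact Or.inr (Or.inl ⟨e, Finset.mem_insert_self _ _, heg, hle⟩)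
        push Not at hle
        refine Or.inr (Or.inr (Or.inr ⟨heg ▸ Finset.mem_insert_self _ _, fun v hv hvg => ?_⟩))
        rcases Finset.mem_insert.1 hv with rfl | hv
        · exact heg ▸ ReflTransGen.refl
        have hg₁ : g.1 ∉ S₀ := fun hg₁ => (hmax g hg hg₁ (heg ▸ h₂)).not_gt hle
        exact absurd (le_of_hasWalk_of_mem_of_notMem hmax hvg hv hg₁) hle.not_ge
      · exact Or.inl fun hg' => (Finset.mem_insert.1 hg').elim (fun h => heg h.symm) hgS
    · exact Or.inr (Or.inl ⟨t, Finset.mem_insert_of_mem ht, htg, hle⟩)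
    · exact Or.inr (Or.inr (Or.inl (hw.filter_insert e)))
    by_cases hg₁ : g.1 ∈ S₀
    · exact Or.inr (Or.inr (Or.inl ((hall g.1 hg₁ ReflTransGen.refl).filter_insert e)))
    have hge : μ g ≤ μ e := le_of_hasWalk_of_mem_of_notMem hmax hcyc hgS hg₁
    refine Or.inr (Or.inr (Or.inr ⟨Finset.mem_insert_of_mem hgS, fun v hv hvg => ?_⟩))
    rcases Finset.mem_insert.1 hv with rfl | hv
    · have he₁ := ReflTransGen.head (Finset.mem_filter.2 ⟨he, hge⟩) hvg
      exact ReflTransGen.tail ((hall _ h₁ he₁).filter_insert e)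
        (Finset.mem_filter.2 ⟨Finset.mem_insert_self _ _, hge⟩)
    · exact (hall v hv hvg).filter_insert e

theorem PrimRun.hasWalk_of_snd_eq_of_lt (h : PrimRun N μ s S T)
    (hS : ∀ f ∈ N, f.1 ∈ S → f.2 ∈ S) {f g : V × V} (hg : g ∈ N)
    (hcyc : HasWalk (N.filter fun t => μ g ≤ μ t) g.2 g.1) (hf : f ∈ T) (hfg : f.2 = g.2)
    (hlt : μ f < μ g) : HasWalk (T.filter fun t => μ g ≤ μ t) g.2 g.1 := by
  rcases h.rival_invariant hg hcyc with hgS | ⟨t, ht, htg, hle⟩ | hw | ⟨hgS, hall⟩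
  · exact absurd (hfg ▸ (h.mem_of_mem hf).2.1) hgS
  · obtain rfl := h.snd_injOn t ht f hf (htg.trans hfg.symm)
    exact absurd hle hlt.not_ge
  · exact hw
  · exact hall g.1 (hcyc.mem_of_closed (fun t ht => hS t (Finset.mem_filter.1 ht).1) hgS)
      ReflTransGen.refl

end Prim

section TreeFirst

variable {V : Type*} {μ : V × V → ℤ} {E T D TT : Finset (V × V)} {p rest : List (V × V)}
  {e g t : V × V} {r w : V}

def Realizes (D : Finset (V × V)) (t : V × V) : Prop :=
  t ∈ D ∨ HasWalk D t.2 t.1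

theorem Realizes.insert (e : V × V) (h : Realizes D t) : Realizes (insert e D) t :=
  h.imp Finset.mem_insert_of_mem (HasWalk.mono (Finset.subset_insert e D))

/-- A realized edge `(p, q)` missing from `D` has `q` on the `D`-walk from `r` to `p`, since
walks into `p` are nested. -/
theorem HasWalk.of_realizes (hD : ∀ e ∈ D, ∀ f ∈ D, e.2 = f.2 → e = f)
    (hr : noIncoming D r) (hTT : noIncoming TT r) (hreal : ∀ t ∈ TT, Realizes D t) {u : V}
    (h : HasWalk TT r u) : HasWalk D r u := by
  induction h with
  | refl => exact ReflTransGen.refl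
  | @tail p q _ hpq ih =>
    rcases hreal _ hpq with hin | hback
    · exact ReflTransGen.tail ih hin
    rcases ih.total_of_snd_injOn hD hback with h | h
    · exact h
    · obtain ⟨f, hf, hfr⟩ := h.exists_mem_snd_eq (hTT _ hpq)
      exact absurd hfr (hr f hf)

theorem IsSetOrdering.isDescOrdering {l : List (V × V)} (h : IsSetOrdering μ E T l) :
    IsDescOrdering μ E l :=
  ⟨h.1, h.2.1, h.2.2.imp And.left⟩

theorem IsSetOrdering.le_of_mem (h : IsSetOrdering μ E T (p ++ e :: rest)) (hg : g ∈ p) :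
    μ e ≤ μ g :=
  ((List.pairwise_append.1 h.2.2).2.2 g hg e List.mem_cons_self).1

theorem IsSetOrdering.mem_of_mem_of_eq (h : IsSetOrdering μ E T (p ++ e :: rest)) (hg : g ∈ p)
    (he : e ∈ T) (hge : μ g = μ e) : g ∈ T :=
  ((List.pairwise_append.1 h.2.2).2.2 g hg e List.mem_cons_self).2 hge he

theorem IsSetOrdering.mem_of_le (h : IsSetOrdering μ E T (p ++ e :: rest)) (hTE : T ⊆ E)
    (he : e ∉ T) (ht : t ∈ T) (hle : μ e ≤ μ t) : t ∈ p := by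
  rcases List.mem_append.1 ((h.2.1 t).2 (hTE ht)) with htp | htr
  · exact htp
  rcases List.mem_cons.1 htr with rfl | htr
  · exact absurd ht he
  obtain ⟨hte, hT⟩ := (List.pairwise_cons.1 (List.pairwise_append.1 h.2.2).2.1).1 t htr
  exact absurd (hT (le_antisymm hte hle).symm ht) he

/-- The invariant of River run with the tree edges first, after processing the prefix `p`. -/
structure TreeFirstInv (μ : V × V → ℤ) (T : Finset (V × V)) (w : V) (p : List (V × V)) :
    Prop where
  noIncoming_root : noIncoming (riverFold p) w
  realizes : ∀ t ∈ T, t ∈ p → Realizes (riverFold p) t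
  le_of_snd_eq : ∀ g ∈ riverFold p, ∀ t ∈ T, t.2 = g.2 → μ g ≤ μ t

theorem TreeFirstInv.hasWalk (hinv : TreeFirstInv μ T w p)
    (horsp : IsSetOrdering μ E T (p ++ g :: rest)) (hTE : T ⊆ E) (hg : g ∉ T)
    (hr : noIncoming (riverFold p) r) (hTr : ∀ t ∈ T, t.2 = r → μ t < μ g) {u : V}
    (h : HasWalk (T.filter fun t => μ g ≤ μ t) r u) : HasWalk (riverFold p) r u := by
  refine h.of_realizes (riverFold_snd_injOn p) hr (fun t ht htr => ?_) fun t ht => ?_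
  · obtain ⟨htT, hle⟩ := Finset.mem_filter.1 ht
    exact (hTr t htT htr).not_ge hle
  · obtain ⟨htT, hle⟩ := Finset.mem_filter.1 ht
    exact hinv.realizes t htT (horsp.mem_of_le hTE hg htT hle)

theorem TreeFirstInv.append_of_riverGuard (hinv : TreeFirstInv μ T w p)
    (horsp : IsSetOrdering μ E T (p ++ e :: rest))
    (huniq : ∀ t ∈ T, ∀ t' ∈ T, t.2 = t'.2 → t = t') (hc : RiverGuard (riverFold p) e) :
    TreeFirstInv μ T w (p ++ [e]) := by
  have hfold : riverFold (p ++ [e]) = riverFold p := by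
    rw [riverFold_append_singleton, guardStep, if_pos hc]
  refine ⟨hfold ▸ hinv.noIncoming_root, fun t ht htp => hfold ▸ ?_,
    hfold ▸ hinv.le_of_snd_eq⟩
  rcases List.mem_append.1 htp with htp | hte
  · exact hinv.realizes t ht htp
  obtain rfl := List.mem_singleton.1 hte
  -- an edge blocking `t` by (R1) has the same margin as `t`, so it is the tree edge `t` itself
  refine Or.inr (hc.resolve_left fun ⟨g, hg, hgt⟩ => ?_)
  have hgp : g ∈ p := mem_of_mem_guardFold (riverFold_eq_guardFold p ▸ hg)
  have hgT : g ∈ T := horsp.mem_of_mem_of_eq hgp ht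
    (le_antisymm (hinv.le_of_snd_eq g hg t ht hgt.symm) (horsp.le_of_mem hgp))
  obtain rfl := huniq g hgT t ht hgt
  exact (List.nodup_append.1 horsp.1).2.2 g hgp g List.mem_cons_self rfl

theorem TreeFirstInv.append_of_not_riverGuard (hinv : TreeFirstInv μ T w p)
    (horsp : IsSetOrdering μ E T (p ++ e :: rest)) (hTE : T ⊆ E) (hhead : noIncoming T w)
    (huniq : ∀ t ∈ T, ∀ t' ∈ T, t.2 = t'.2 → t = t')
    (hrival : ∀ t ∈ T, t.2 = e.2 → μ t < μ e →
      HasWalk (T.filter fun t => μ e ≤ μ t) e.2 e.1)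
    (hroot : e.2 = w → HasWalk (T.filter fun t => μ e ≤ μ t) w e.1)
    (hc : ¬ RiverGuard (riverFold p) e) : TreeFirstInv μ T w (p ++ [e]) := by
  have hfold : riverFold (p ++ [e]) = insert e (riverFold p) := by
    rw [riverFold_append_singleton, guardStep, if_neg hc]
  have hsrc : noIncoming (riverFold p) e.2 := fun f hf hfe => hc (Or.inl ⟨f, hf, hfe⟩)
  have hew : e.2 ≠ w := fun hew => hc (Or.inr (hew ▸ hinv.hasWalk horsp hTE
    (fun heT => hhead e heT hew) hinv.noIncoming_root
    (fun t ht htw => absurd htw (hhead t ht)) (hroot hew)))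
  refine ⟨?_, fun t ht htp => ?_, ?_⟩ <;> rw [hfold]
  · intro f hf
    rcases Finset.mem_insert.1 hf with rfl | hf
    exacts [hew, hinv.noIncoming_root f hf]
  · rcases List.mem_append.1 htp with htp | hte
    · exact (hinv.realizes t ht htp).insert e
    · exact Or.inl (List.mem_singleton.1 hte ▸ Finset.mem_insert_self _ _)
  intro g hg t ht htg
  rcases Finset.mem_insert.1 hg with rfl | hg
  · -- a heavier non-tree edge into a tree head would close a cycle already in the diagram
    by_contra! hlt
    have hgT : g ∉ T := fun hgT => (huniq g hgT t ht htg.symm ▸ hlt).false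
    refine hc (Or.inr (hinv.hasWalk horsp hTE hgT hsrc (fun t' ht' ht'g => ?_)
      (hrival t ht htg hlt)))
    exact huniq t' ht' t ht (ht'g.trans htg.symm) ▸ hlt
  · exact hinv.le_of_snd_eq g hg t ht htg

theorem noIncoming_riverFold_of_isSetOrdering {orsp : List (V × V)}
    (horsp : IsSetOrdering μ E T orsp) (hTE : T ⊆ E) (hhead : noIncoming T w)
    (huniq : ∀ t ∈ T, ∀ t' ∈ T, t.2 = t'.2 → t = t')
    (hrival : ∀ g ∈ riverFold orsp, ∀ t ∈ T, t.2 = g.2 → μ t < μ g →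
      HasWalk (T.filter fun t => μ g ≤ μ t) g.2 g.1)
    (hroot : ∀ e ∈ E, e.2 = w → HasWalk (T.filter fun t => μ e ≤ μ t) w e.1) :
    noIncoming (riverFold orsp) w := by
  suffices ∀ p, p <+: orsp → TreeFirstInv μ T w p from
    (this orsp (List.prefix_refl _)).noIncoming_root
  intro p
  induction p using List.reverseRecOn with
  | nil => exact fun _ => ⟨by simp [noIncoming, riverFold], by simp, by simp [riverFold]⟩
  | append_singleton p e ih =>
    rintro ⟨rest, rfl⟩
    have hinv := ih ((List.prefix_append _ _).trans (List.prefix_append _ _))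
    simp only [List.append_assoc, List.singleton_append] at horsp hrival
    by_cases hc : RiverGuard (riverFold p) e
    · exact hinv.append_of_riverGuard horsp huniq hc
    · have he : e ∈ riverFold (p ++ e :: rest) := by
        have : riverFold (p ++ [e]) ⊆ riverFold (p ++ e :: rest) := by
          simp only [riverFold_eq_guardFold]
          exact guardFold_mono ⟨rest, by simp⟩
        rw [riverFold_append_singleton, guardStep, if_neg hc] at this
        exact this (Finset.mem_insert_self _ _)
      exact hinv.append_of_not_riverGuard horsp hTE hhead huniq (hrival e he)
        (hroot e ((horsp.2.1 e).1 (by simp))) hc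

end TreeFirst

theorem put_winner_iff_wins_with_rsp_ordering_general
    {A : Type*} [Fintype A] {m : ℕ}
    (P : Profile A m) (w : A)
    (o : List (A × A)) (ho : IsDescOrdering (marginE P) (marginEdges P) o)
    (T : Finset (A × A))
    (hT : IsPrimOutput (semiRiverFold (marginE P) o) (marginE P) w T)
    (orsp : List (A × A))
    (horsp : IsSetOrdering (marginE P) (marginEdges P) T orsp) :
    (∃ o' : List (A × A), IsDescOrdering (marginE P) (marginEdges P) o' ∧
      noIncoming (riverFold o') w) ↔ noIncoming (riverFold orsp) w := by
  obtain ⟨S, hrun, hS⟩ := hT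
  refine ⟨fun ⟨o', ho', hwin⟩ => ?_, fun h => ⟨orsp, horsp.isDescOrdering, h⟩⟩
  have hTN : T ⊆ semiRiverFold (marginE P) o := fun t ht => (hrun.mem_of_mem ht).1
  refine noIncoming_riverFold_of_isSetOrdering horsp (hTN.trans (semiRiverFold_subset ho))
    (fun t ht => (hrun.mem_of_mem ht).2.2) hrun.snd_injOn (fun g hg t ht htg hlt => ?_)
    fun e he hew => ?_
  · have hgN := riverFold_subset_semiRiverFold ho horsp.isDescOrdering hg
    exact hrun.hasWalk_of_snd_eq_of_lt hS hgN
      (hasWalk_of_mem_semiRiverFold ho (hTN ht) hgN htg.symm hlt) ht htg hlt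
  · exact hrun.hasWalk_filter hS _ ((hasWalk_of_noIncoming_riverFold ho' hwin he hew).mono
      (Finset.filter_subset_filter _ (riverFold_subset_semiRiverFold ho ho')))

/-- For every preference profile `P` and every alternative `w`:
`w` is a River PUT winner of `P` if and only if `w` is a winner of River run with the
ordering `σ(E(M(P)), E(T^RSP(w, sRV(P))))`, i.e. any descending linear ordering of the
margin-graph edges in which, among edges of equal margin, the edges of an output `T` of
directed Prim started at `w` on the semi-River diagram (computed with any descending
linear ordering `o`) come first. Consequently, the set of River PUT winners is exactly
the set of alternatives passing this check. -/
theorem put_winner_iff_wins_with_rsp_ordering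
    {A : Type*} [Fintype A] {m : ℕ} (hm : 1 ≤ m) (hA : 2 ≤ Fintype.card A)
    (P : Profile A m) (w : A)
    (o : List (A × A)) (ho : IsDescOrdering (marginE P) (marginEdges P) o)
    (T : Finset (A × A))
    (hT : IsPrimOutput (semiRiverFold (marginE P) o) (marginE P) w T)
    (orsp : List (A × A))
    (horsp : IsSetOrdering (marginE P) (marginEdges P) T orsp) :
    (∃ o' : List (A × A), IsDescOrdering (marginE P) (marginEdges P) o' ∧
      noIncoming (riverFold o') w) ↔ noIncoming (riverFold orsp) w :=
  put_winner_iff_wins_with_rsp_ordering_general P w o ho T hT orsp horsp
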